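/- arXiv:2408.07898 — 2 statements merged into one kernel-verified Lean document; each statement's English description precedes it below -/
import Mathlib

section
/- Any sequence of CNOT operations transforming the n×n identity into an invertible matrix M over F_2 contains at least e(M) − v(M) cut gates, where a cut gate is a CNOT step that increases the number of edge-connectivity components e, using that e(I)=n, each link gate decreases e by exactly 1, each cut gate increases e by exactly 1, and all other gates leave e unchanged, with exactly at least n − v(M) link gates forced. -/
open Matrix

variable {n : ℕ}

/-- Vertex-connectivity graph `G_v(M)`: edge between distinct `i, j` iff `M i j = 1` or `M j i = 1`. -/
def Gv (M : Matrix (Fin n) (Fin n) (ZMod 2)) : SimpleGraph (Fin n) :=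
  SimpleGraph.fromRel (fun i j => M i j = 1)

/-- `v(M)`: number of connected components of `G_v(M)`. -/
noncomputable def vcomp (M : Matrix (Fin n) (Fin n) (ZMod 2)) : ℕ :=
  Nat.card (Gv M).ConnectedComponent

/-- Edge-connectivity graph `G_e(M)`: `inl i` is row `R_i`, `inr j` is column `C_j`;
edge `R_i – C_j` iff `M i j = 1`. -/
def Ge (M : Matrix (Fin n) (Fin n) (ZMod 2)) : SimpleGraph (Fin n ⊕ Fin n) :=
  SimpleGraph.fromRel (fun x y => ∃ i j, x = Sum.inl i ∧ y = Sum.inr j ∧ M i j = 1)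

/-- `e(M)`: number of connected components of `G_e(M)`. -/
noncomputable def ecomp (M : Matrix (Fin n) (Fin n) (ZMod 2)) : ℕ :=
  Nat.card (Ge M).ConnectedComponent

/-- The result of the CNOT operation `CNOT(i,j)`: add row `i` of `M` to row `j` over `F_2`. -/
def cnotStep (M : Matrix (Fin n) (Fin n) (ZMod 2)) (i j : Fin n) :
    Matrix (Fin n) (Fin n) (ZMod 2) :=
  M.updateRow j (M i + M j)

/-- A river of `M`: a permutation `σ` with `M k (σ k) = 1` for all `k`. -/
def IsRiver (M : Matrix (Fin n) (Fin n) (ZMod 2)) (σ : Equiv.Perm (Fin n)) : Prop :=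
  ∀ k, M k (σ k) = 1

instance (M : Matrix (Fin n) (Fin n) (ZMod 2)) : DecidablePred (IsRiver M) := fun σ => by
  unfold IsRiver; exact Fintype.decidableForallFintype

/-- A CNOT gate matrix: `I + E_{j,i}` for `i ≠ j` (left-multiplication adds row `i` to row `j`). -/
def IsCNOT (E : Matrix (Fin n) (Fin n) (ZMod 2)) : Prop :=
  ∃ i j : Fin n, i ≠ j ∧ E = 1 + Matrix.single j i 1

/-- `s(M)`: the minimum number of CNOT gate matrices whose product is `M`. -/
noncomputable def synthSize (M : Matrix (Fin n) (Fin n) (ZMod 2)) : ℕ :=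
  sInf {k | ∃ L : List (Matrix (Fin n) (Fin n) (ZMod 2)),
    L.length = k ∧ (∀ E ∈ L, IsCNOT E) ∧ L.prod = M}

/-- The permutation matrix `P_σ` with `(P_σ)_{i, σ(i)} = 1`. -/
def Pmat (σ : Equiv.Perm (Fin n)) : Matrix (Fin n) (Fin n) (ZMod 2) :=
  Matrix.of fun i j => if σ i = j then 1 else 0

/-!
Deleting row `j` from `M` gives graphs `H_v`, `H_e` that a CNOT onto row `j` leaves unchanged,
and `G_v(M)`, `G_e(M)` are these plus a star from `j` (resp. `R_j`) to the support of row `j`.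
Adding a star merges all components it touches into one, so each component count is
`#comp(H) + 1` minus the number of touched components. A CNOT from row `i` changes the touched
set only by the component of `i` (resp. `R_i`); hence `e` rises by at most one and `v` falls by
at most one. If `v` drops, the touched set of `H_v` grows; as `H_e`-reachability projects to
`H_v`-reachability under `R_x, C_x ↦ x`, the touched set of `H_e` grows as well, and `e` drops.
Counting along the sequence from `e(I) = v(I) = n` gives the bound.
-/

theorem Nat.card_add_ncard_of_collapse {α β : Type*} [Finite α] {q : α → β}
    (hq : q.Surjective) {T : Set α} {c₀ : α} (hc₀ : c₀ ∈ T)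
    (hfib : ∀ c d, q c = q d ↔ c = d ∨ c ∈ T ∧ d ∈ T) :
    Nat.card β + T.ncard = Nat.card α + 1 := by
  have : Finite β := .of_surjective q hq
  have hcover : q '' Tᶜ ∪ {q c₀} = Set.univ := by
    refine Set.eq_univ_of_forall fun b => ?_
    obtain ⟨c, rfl⟩ := hq b
    by_cases hc : c ∈ T
    · exact .inr ((hfib c c₀).2 (.inr ⟨hc, hc₀⟩))
    · exact .inl ⟨c, hc, rfl⟩
  have hdisj : q c₀ ∉ q '' Tᶜ := by
    rintro ⟨c, hc, hcc₀⟩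
    rcases (hfib c c₀).1 hcc₀ with rfl | ⟨hcT, -⟩ <;> contradiction
  have hinj : Set.InjOn q Tᶜ := fun c hc d _ hcd =>
    ((hfib c d).1 hcd).resolve_right fun h => hc h.1
  have hβ : Nat.card β = Tᶜ.ncard + 1 := by
    rw [← Set.ncard_univ, ← hcover, Set.ncard_union_eq (by simpa using hdisj),
      hinj.ncard_image, Set.ncard_singleton]
  have hα := Set.ncard_add_ncard_compl T
  omega

theorem Set.ncard_lt_ncard_of_subset_insert {α : Type*} {A B : Set α} {c : α} (hB : B.Finite)
    (hA : A ⊆ insert c B) (hBA : B ⊆ insert c A) (hnot : ¬B ⊆ A) : A.ncard < B.ncard := by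
  obtain ⟨x, hxB, hxA⟩ := Set.not_subset.1 hnot
  obtain rfl : x = c := (hBA hxB).resolve_right hxA
  have hAB : A ⊆ B := fun y hy => (hA hy).resolve_left fun hyx => hxA (hyx ▸ hy)
  exact Set.ncard_lt_ncard (hAB.ssubset_of_not_subset fun h => hxA (h hxB)) hB

namespace SimpleGraph

variable {V W : Type*}

theorem Reachable.rel_of_adj {G : SimpleGraph V} {r : V → V → Prop} (hrefl : ∀ x, r x x)
    (htrans : ∀ x y z, r x y → r y z → r x z) (hadj : ∀ x y, G.Adj x y → r x y) {x y : V}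
    (h : G.Reachable x y) : r x y := by
  rw [reachable_iff_reflTransGen] at h
  induction h with
  | refl => exact hrefl x
  | tail _ hyz ih => exact htrans _ _ _ ih (hadj _ _ hyz)

theorem Reachable.map_of_adj {G : SimpleGraph V} {G' : SimpleGraph W} (f : V → W)
    (hadj : ∀ x y, G.Adj x y → G'.Reachable (f x) (f y)) {x y : V} (h : G.Reachable x y) :
    G'.Reachable (f x) (f y) :=
  h.rel_of_adj (fun _ => .rfl) (fun _ _ _ => Reachable.trans) hadj

theorem image_connectedComponentMk_subset_of_map {G : SimpleGraph V} {G' : SimpleGraph W}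
    (f : V → W) (hadj : ∀ x y, G.Adj x y → G'.Reachable (f x) (f y)) {A B : Set V}
    (h : G.connectedComponentMk '' A ⊆ G.connectedComponentMk '' B) :
    G'.connectedComponentMk '' (f '' A) ⊆ G'.connectedComponentMk '' (f '' B) := by
  rintro _ ⟨_, ⟨x, hx, rfl⟩, rfl⟩
  obtain ⟨y, hy, hxy⟩ := h ⟨x, hx, rfl⟩
  exact ⟨f y, ⟨y, hy, rfl⟩, ConnectedComponent.sound
    ((ConnectedComponent.exact hxy).map_of_adj f hadj)⟩

theorem image_connectedComponentMk_insert_subset (H : SimpleGraph V) {a b : V} {s t : Set V}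
    (h : ∀ x ∈ t, x ∈ s ∨ H.Reachable x b) :
    H.connectedComponentMk '' insert a t ⊆
      insert (H.connectedComponentMk b) (H.connectedComponentMk '' insert a s) := by
  rintro _ ⟨x, hx, rfl⟩
  rcases hx with rfl | hx
  · exact .inr ⟨x, .inl rfl, rfl⟩
  rcases h x hx with hs | hb
  · exact .inr ⟨x, .inr hs, rfl⟩
  · exact .inl (ConnectedComponent.sound hb)

def starFrom (a : V) (s : Set V) : SimpleGraph V :=
  fromRel fun x y => x = a ∧ y ∈ s

theorem reachable_sup_starFrom_iff (H : SimpleGraph V) (a : V) (s : Set V) {x y : V} :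
    (H ⊔ starFrom a s).Reachable x y ↔
      H.connectedComponentMk x = H.connectedComponentMk y ∨
        H.connectedComponentMk x ∈ H.connectedComponentMk '' insert a s ∧
          H.connectedComponentMk y ∈ H.connectedComponentMk '' insert a s := by
  set T := H.connectedComponentMk '' insert a s
  constructor
  · refine Reachable.rel_of_adj
      (r := fun x y => H.connectedComponentMk x = H.connectedComponentMk y ∨
        H.connectedComponentMk x ∈ T ∧ H.connectedComponentMk y ∈ T)
      (fun _ => .inl rfl) (fun _ _ _ => by grind) ?_
    rintro x y (hH | ⟨-, ⟨rfl, hy⟩ | ⟨rfl, hx⟩⟩)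
    · exact .inl (ConnectedComponent.sound hH.reachable)
    · exact .inr ⟨⟨x, .inl rfl, rfl⟩, ⟨y, .inr hy, rfl⟩⟩
    · exact .inr ⟨⟨x, .inr hx, rfl⟩, ⟨y, .inl rfl, rfl⟩⟩
  have to_a : ∀ w ∈ insert a s, (H ⊔ starFrom a s).Reachable w a := by
    rintro w (rfl | hw)
    · rfl
    by_cases hwa : w = a
    · rw [hwa]
    exact Adj.reachable (.inr ⟨hwa, .inr ⟨rfl, hw⟩⟩)
  have to_T : ∀ z, H.connectedComponentMk z ∈ T → (H ⊔ starFrom a s).Reachable z a := by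
    rintro z ⟨w, hw, hwz⟩
    exact ((ConnectedComponent.exact hwz).symm.mono le_sup_left).trans (to_a w hw)
  rintro (hxy | ⟨hx, hy⟩)
  · exact (ConnectedComponent.exact hxy).mono le_sup_left
  · exact (to_T x hx).trans (to_T y hy).symm

theorem card_connectedComponent_sup_starFrom [Finite V] (H : SimpleGraph V) (a : V)
    (s : Set V) :
    Nat.card (H ⊔ starFrom a s).ConnectedComponent +
        (H.connectedComponentMk '' insert a s).ncard =
      Nat.card H.ConnectedComponent + 1 := by
  refine Nat.card_add_ncard_of_collapse (q := ConnectedComponent.map (Hom.ofLE le_sup_left))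
    (c₀ := H.connectedComponentMk a) ?_ ⟨a, .inl rfl, rfl⟩ ?_
  · exact ConnectedComponent.ind fun v => ⟨H.connectedComponentMk v, rfl⟩
  · refine ConnectedComponent.ind₂ fun x y => ?_
    simp only [ConnectedComponent.map_mk, Hom.coe_ofLE, id_eq, ConnectedComponent.eq]
    rw [reachable_sup_starFrom_iff, ConnectedComponent.eq]

end SimpleGraph

open SimpleGraph

def rowSupport (M : Matrix (Fin n) (Fin n) (ZMod 2)) (j : Fin n) : Set (Fin n) :=
  {l | M j l = 1}

theorem Gv_eq_sup_starFrom (M : Matrix (Fin n) (Fin n) (ZMod 2)) (j : Fin n) :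
    Gv M = Gv (M.updateRow j 0) ⊔ starFrom j (rowSupport M j) := by
  ext x y
  simp only [Gv, starFrom, rowSupport, fromRel_adj, sup_adj, updateRow_apply, Set.mem_ofPred_eq]
  by_cases hx : x = j <;> by_cases hy : y = j <;> simp_all
  tauto

theorem Ge_eq_sup_starFrom (M : Matrix (Fin n) (Fin n) (ZMod 2)) (j : Fin n) :
    Ge M = Ge (M.updateRow j 0) ⊔ starFrom (Sum.inl j) (Sum.inr '' rowSupport M j) := by
  ext x y
  simp only [Ge, starFrom, rowSupport, fromRel_adj, sup_adj, updateRow_apply, Set.mem_image,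
    Set.mem_ofPred_eq]
  constructor
  · rintro ⟨hne, ⟨p, q, rfl, rfl, h⟩ | ⟨p, q, rfl, rfl, h⟩⟩ <;> by_cases hp : p = j <;>
      simp_all
  · rintro (⟨hne, ⟨p, q, rfl, rfl, h⟩ | ⟨p, q, rfl, rfl, h⟩⟩ |
      ⟨hne, ⟨rfl, q, hq, rfl⟩ | ⟨rfl, q, hq, rfl⟩⟩) <;>
    (try split_ifs at h) <;> simp_all

theorem cnotStep_updateRow_zero (M : Matrix (Fin n) (Fin n) (ZMod 2)) (i j : Fin n) :
    (cnotStep M i j).updateRow j 0 = M.updateRow j 0 := by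
  ext x y
  by_cases hx : x = j <;> simp [cnotStep, updateRow_apply, hx]

theorem cnotStep_cnotStep (M : Matrix (Fin n) (Fin n) (ZMod 2)) {i j : Fin n} (hij : i ≠ j) :
    cnotStep (cnotStep M i j) i j = M := by
  ext x y
  by_cases hx : x = j
  · subst hx
    simp [cnotStep, updateRow_apply, hij, ← add_assoc, CharTwo.add_self_eq_zero]
  · simp [cnotStep, updateRow_apply, hx]

theorem mem_rowSupport_or_of_mem_rowSupport_cnotStep (M : Matrix (Fin n) (Fin n) (ZMod 2))
    {i j l : Fin n} (hl : l ∈ rowSupport (cnotStep M i j) j) :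
    l ∈ rowSupport M j ∨ M i l = 1 := by
  have hsum : M i l + M j l = 1 := by simpa [rowSupport, cnotStep] using hl
  have : ∀ a b : ZMod 2, a + b = 1 → b = 1 ∨ a = 1 := by decide
  exact this _ _ hsum

theorem vcomp_add_ncard (M : Matrix (Fin n) (Fin n) (ZMod 2)) (j : Fin n) :
    vcomp M + ((Gv (M.updateRow j 0)).connectedComponentMk '' insert j (rowSupport M j)).ncard =
      Nat.card (Gv (M.updateRow j 0)).ConnectedComponent + 1 := by
  rw [vcomp, Gv_eq_sup_starFrom M j]
  exact card_connectedComponent_sup_starFrom _ _ _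

theorem ecomp_add_ncard (M : Matrix (Fin n) (Fin n) (ZMod 2)) (j : Fin n) :
    ecomp M + ((Ge (M.updateRow j 0)).connectedComponentMk ''
        insert (Sum.inl j) (Sum.inr '' rowSupport M j)).ncard =
      Nat.card (Ge (M.updateRow j 0)).ConnectedComponent + 1 := by
  rw [ecomp, Ge_eq_sup_starFrom M j]
  exact card_connectedComponent_sup_starFrom _ _ _

theorem Gv_image_rowSupport_cnotStep_subset (M : Matrix (Fin n) (Fin n) (ZMod 2)) {i j : Fin n}
    (hij : i ≠ j) :
    (Gv (M.updateRow j 0)).connectedComponentMk '' insert j (rowSupport (cnotStep M i j) j) ⊆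
      insert ((Gv (M.updateRow j 0)).connectedComponentMk i)
        ((Gv (M.updateRow j 0)).connectedComponentMk '' insert j (rowSupport M j)) := by
  refine image_connectedComponentMk_insert_subset _ fun l hl => ?_
  refine (mem_rowSupport_or_of_mem_rowSupport_cnotStep M hl).imp_right fun hil => ?_
  by_cases hli : l = i
  · rw [hli]
  · exact Adj.reachable ⟨hli, .inr (by simp [updateRow_ne hij, hil])⟩

theorem Ge_image_rowSupport_cnotStep_subset (M : Matrix (Fin n) (Fin n) (ZMod 2)) {i j : Fin n}
    (hij : i ≠ j) :
    (Ge (M.updateRow j 0)).connectedComponentMk ''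
        insert (Sum.inl j) (Sum.inr '' rowSupport (cnotStep M i j) j) ⊆
      insert ((Ge (M.updateRow j 0)).connectedComponentMk (Sum.inl i))
        ((Ge (M.updateRow j 0)).connectedComponentMk ''
          insert (Sum.inl j) (Sum.inr '' rowSupport M j)) := by
  refine image_connectedComponentMk_insert_subset _ ?_
  rintro _ ⟨l, hl, rfl⟩
  refine (mem_rowSupport_or_of_mem_rowSupport_cnotStep M hl).imp (Set.mem_image_of_mem _)
    fun hil => Adj.reachable ?_
  exact ⟨Sum.inr_ne_inl, .inr ⟨i, l, rfl, rfl, by simp [updateRow_ne hij, hil]⟩⟩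

theorem vcomp_le_vcomp_cnotStep_add_one (M : Matrix (Fin n) (Fin n) (ZMod 2)) {i j : Fin n}
    (hij : i ≠ j) : vcomp M ≤ vcomp (cnotStep M i j) + 1 := by
  have hM := vcomp_add_ncard M j
  have hN := vcomp_add_ncard (cnotStep M i j) j
  rw [cnotStep_updateRow_zero] at hN
  have := (Set.ncard_le_ncard (Gv_image_rowSupport_cnotStep_subset M hij)).trans
    (Set.ncard_insert_le _ _)
  omega

theorem ecomp_le_ecomp_cnotStep_add_one (M : Matrix (Fin n) (Fin n) (ZMod 2)) {i j : Fin n}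
    (hij : i ≠ j) : ecomp M ≤ ecomp (cnotStep M i j) + 1 := by
  have hM := ecomp_add_ncard M j
  have hN := ecomp_add_ncard (cnotStep M i j) j
  rw [cnotStep_updateRow_zero] at hN
  have := (Set.ncard_le_ncard (Ge_image_rowSupport_cnotStep_subset M hij)).trans
    (Set.ncard_insert_le _ _)
  omega

theorem ecomp_cnotStep_le_ecomp_add_one (M : Matrix (Fin n) (Fin n) (ZMod 2)) {i j : Fin n}
    (hij : i ≠ j) : ecomp (cnotStep M i j) ≤ ecomp M + 1 := by
  simpa only [cnotStep_cnotStep M hij] using ecomp_le_ecomp_cnotStep_add_one (cnotStep M i j) hij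

theorem Gv_reachable_elim_of_Ge_adj (A : Matrix (Fin n) (Fin n) (ZMod 2)) (x y : Fin n ⊕ Fin n)
    (h : (Ge A).Adj x y) : (Gv A).Reachable (Sum.elim id id x) (Sum.elim id id y) := by
  obtain ⟨-, ⟨p, q, rfl, rfl, hpq⟩ | ⟨p, q, rfl, rfl, hpq⟩⟩ := h
  all_goals
    by_cases hp : p = q
    · simp [hp]
  · exact Adj.reachable ⟨hp, .inl hpq⟩
  · exact Adj.reachable ⟨Ne.symm hp, .inr hpq⟩

theorem ecomp_cnotStep_lt_of_vcomp_lt (M : Matrix (Fin n) (Fin n) (ZMod 2)) {i j : Fin n}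
    (hij : i ≠ j) (hv : vcomp (cnotStep M i j) < vcomp M) : ecomp (cnotStep M i j) < ecomp M := by
  have hvM := vcomp_add_ncard M j
  have hvN := vcomp_add_ncard (cnotStep M i j) j
  have heM := ecomp_add_ncard M j
  have heN := ecomp_add_ncard (cnotStep M i j) j
  have hMN := Ge_image_rowSupport_cnotStep_subset (cnotStep M i j) hij
  rw [cnotStep_updateRow_zero] at hvN heN hMN
  rw [cnotStep_cnotStep M hij] at hMN
  have hNM := Ge_image_rowSupport_cnotStep_subset M hij
  set He := Ge (M.updateRow j 0)
  have hnot : ¬He.connectedComponentMk '' insert (.inl j) (.inr '' rowSupport (cnotStep M i j) j)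
      ⊆ He.connectedComponentMk '' insert (.inl j) (.inr '' rowSupport M j) := fun h => by
    have := image_connectedComponentMk_subset_of_map (Sum.elim id id)
      (Gv_reachable_elim_of_Ge_adj _) h
    have hproj : ∀ S : Set (Fin n), Sum.elim id id '' insert (.inl j) (.inr '' S) = insert j S :=
      fun S => by simp [Set.image_insert_eq, Set.image_image]
    rw [hproj, hproj] at this
    have := Set.ncard_le_ncard this
    omega
  have := Set.ncard_lt_ncard_of_subset_insert (Set.toFinite _) hMN hNM hnot
  omega

theorem Gv_one : Gv (1 : Matrix (Fin n) (Fin n) (ZMod 2)) = ⊥ := by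
  ext x y
  simp only [Gv, fromRel_adj, bot_adj, iff_false, not_and]
  intro hne
  simp [one_apply_ne hne, one_apply_ne (Ne.symm hne)]

theorem vcomp_one : vcomp (1 : Matrix (Fin n) (Fin n) (ZMod 2)) = n := by
  have hbij : Function.Bijective (Gv (1 : Matrix (Fin n) (Fin n) (ZMod 2))).connectedComponentMk :=
    ⟨fun x y hxy => by simpa [Gv_one] using hxy, ConnectedComponent.ind fun v => ⟨v, rfl⟩⟩
  rw [vcomp, ← Nat.card_eq_of_bijective _ hbij, Nat.card_eq_fintype_card, Fintype.card_fin]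

theorem ecomp_one : ecomp (1 : Matrix (Fin n) (Fin n) (ZMod 2)) = n := by
  have hbij : Function.Bijective fun p : Fin n =>
      (Ge (1 : Matrix (Fin n) (Fin n) (ZMod 2))).connectedComponentMk (Sum.inl p) := by
    refine ⟨fun p q hpq => ?_, ConnectedComponent.ind ?_⟩
    · have := (ConnectedComponent.exact hpq).map_of_adj _ (Gv_reachable_elim_of_Ge_adj 1)
      simpa [Gv_one] using this
    · rintro (p | p)
      · exact ⟨p, rfl⟩
      · exact ⟨p, ConnectedComponent.sound
          (Adj.reachable ⟨Sum.inl_ne_inr, .inl ⟨p, p, rfl, rfl, one_apply_eq p⟩⟩)⟩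
  rw [ecomp, ← Nat.card_eq_of_bijective _ hbij, Nat.card_eq_fintype_card, Fintype.card_fin]

theorem add_le_add_card_filter_increments {e v : ℕ → ℕ} {k : ℕ}
    (he : ∀ t < k, e (t + 1) ≤ e t + 1) (hv : ∀ t < k, v t ≤ v (t + 1) + 1)
    (hlink : ∀ t < k, v (t + 1) < v t → e (t + 1) < e t) :
    e k + v 0 ≤ e 0 + v k + ((Finset.range k).filter fun t => e (t + 1) = e t + 1).card := by
  induction k with
  | zero => simp
  | succ k ih =>
    have hk := ih (fun t ht => he t (by omega)) (fun t ht => hv t (by omega))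
      (fun t ht => hlink t (by omega))
    have hek := he k (by omega)
    have hvk := hv k (by omega)
    have hlk := hlink k (by omega)
    rw [Finset.range_add_one, Finset.filter_insert]
    split_ifs with hup
    · rw [Finset.card_insert_of_notMem (by simp)]
      omega
    · omega

theorem stmt11_general (n k : ℕ) (M : Matrix (Fin n) (Fin n) (ZMod 2))
    (f : ℕ → Matrix (Fin n) (Fin n) (ZMod 2)) (h0 : f 0 = 1) (hk : f k = M)
    (hstep : ∀ t < k, ∃ i j : Fin n, i ≠ j ∧ f (t + 1) = cnotStep (f t) i j) :
    ecomp M - vcomp M ≤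
      ((Finset.range k).filter (fun t => ecomp (f (t + 1)) = ecomp (f t) + 1)).card := by
  have he : ∀ t < k, ecomp (f (t + 1)) ≤ ecomp (f t) + 1 := fun t ht => by
    obtain ⟨i, j, hij, hf⟩ := hstep t ht
    exact hf ▸ ecomp_cnotStep_le_ecomp_add_one _ hij
  have hv : ∀ t < k, vcomp (f t) ≤ vcomp (f (t + 1)) + 1 := fun t ht => by
    obtain ⟨i, j, hij, hf⟩ := hstep t ht
    exact hf ▸ vcomp_le_vcomp_cnotStep_add_one _ hij
  have hlink : ∀ t < k, vcomp (f (t + 1)) < vcomp (f t) → ecomp (f (t + 1)) < ecomp (f t) :=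
    fun t ht => by
      obtain ⟨i, j, hij, hf⟩ := hstep t ht
      exact hf ▸ ecomp_cnotStep_lt_of_vcomp_lt _ hij
  have := add_le_add_card_filter_increments (e := fun t => ecomp (f t))
    (v := fun t => vcomp (f t)) he hv hlink
  simp only [h0, hk, ecomp_one, vcomp_one] at this
  omega

/-- Any sequence of CNOT operations taking `I` to `M` contains at least `e(M) - v(M)` cut gates. -/
theorem stmt11 (n k : ℕ) (M : Matrix (Fin n) (Fin n) (ZMod 2)) (hM : IsUnit M)
    (f : ℕ → Matrix (Fin n) (Fin n) (ZMod 2)) (h0 : f 0 = 1) (hk : f k = M)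
    (hstep : ∀ t < k, ∃ i j : Fin n, i ≠ j ∧ f (t + 1) = cnotStep (f t) i j) :
    ecomp M - vcomp M ≤
      ((Finset.range k).filter (fun t => ecomp (f (t + 1)) = ecomp (f t) + 1)).card :=
  stmt11_general n k M f h0 hk hstep
end

section
/- Let M be obtained from the identity by a sequence of CNOT operations and suppose M has d zeroes on its main diagonal. Then at least d of the CNOT operations in the sequence are not link gates. In particular, a link gate (a CNOT step decreasing the number of vertex-connectivity components) never changes any diagonal entry. -/
open Matrix

variable {n : ℕ}

lemma zmod2_cases : ∀ x : ZMod 2, x = 0 ∨ x = 1 := by decide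

lemma zmod2_add_eq_one : ∀ {x y : ZMod 2}, x + y = 1 → x = 1 ∨ y = 1 := by decide

lemma cnotStep_apply_ne (M : Matrix (Fin n) (Fin n) (ZMod 2)) (i j : Fin n) {a : Fin n}
    (ha : a ≠ j) (b : Fin n) : cnotStep M i j a b = M a b := by
  simp [cnotStep, Matrix.updateRow_ne ha]

lemma cnotStep_apply_self (M : Matrix (Fin n) (Fin n) (ZMod 2)) (i j b : Fin n) :
    cnotStep M i j j b = M i b + M j b := by
  simp [cnotStep]

lemma reach_of_one {M : Matrix (Fin n) (Fin n) (ZMod 2)} {a b : Fin n} (h : M a b = 1) :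
    (Gv M).Reachable a b := by
  by_cases hab : a = b
  · subst hab; exact SimpleGraph.Reachable.refl _
  · exact SimpleGraph.Adj.reachable ⟨hab, Or.inl h⟩

lemma adj_reach {M : Matrix (Fin n) (Fin n) (ZMod 2)} {i j : Fin n} (hij : i ≠ j)
    (h1 : M i j = 1) {a b : Fin n} (h : (Gv (cnotStep M i j)).Adj a b) :
    (Gv M).Reachable a b := by
  have key : ∀ a b : Fin n, cnotStep M i j a b = 1 → (Gv M).Reachable a b := by
    intro a b hab
    by_cases haj : a = j
    · subst haj
      rw [cnotStep_apply_self] at hab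
      rcases zmod2_add_eq_one hab with h' | h'
      · exact ((reach_of_one h1).symm).trans (reach_of_one h')
      · exact reach_of_one h'
    · rw [cnotStep_apply_ne M i j haj] at hab
      exact reach_of_one hab
  obtain ⟨hne, hor | hor⟩ := h
  · exact key a b hor
  · exact (key b a hor).symm

lemma vcomp_le_of_one {M : Matrix (Fin n) (Fin n) (ZMod 2)} {i j : Fin n} (hij : i ≠ j)
    (h1 : M i j = 1) : vcomp M ≤ vcomp (cnotStep M i j) := by
  have hreach : ∀ a b : Fin n, (Gv (cnotStep M i j)).Reachable a b → (Gv M).Reachable a b := by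
    intro a b h
    obtain ⟨w⟩ := h
    induction w with
    | nil => exact SimpleGraph.Reachable.refl _
    | cons h _ ih => exact (adj_reach hij h1 h).trans ih
  have hsurj : Function.Surjective
      (fun c : (Gv (cnotStep M i j)).ConnectedComponent =>
        c.lift (fun v => (Gv M).connectedComponentMk v)
          (fun v w p _ => SimpleGraph.ConnectedComponent.sound (hreach v w p.reachable))) := by
    intro c
    refine c.ind (fun v => ?_)
    exact ⟨(Gv (cnotStep M i j)).connectedComponentMk v, rfl⟩
  exact Nat.card_le_card_of_surjective _ hsurj

/-- If `M` is obtained from `I` by CNOT operations and has `d` zeroes on its diagonal, then at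
least `d` of the operations are not link gates. -/
theorem stmt13 (n k : ℕ) (M : Matrix (Fin n) (Fin n) (ZMod 2))
    (f : ℕ → Matrix (Fin n) (Fin n) (ZMod 2)) (h0 : f 0 = 1) (hk : f k = M)
    (hstep : ∀ t < k, ∃ i j : Fin n, i ≠ j ∧ f (t + 1) = cnotStep (f t) i j) :
    (Finset.univ.filter (fun i : Fin n => M i i = 0)).card ≤
      ((Finset.range k).filter (fun t => ¬ vcomp (f (t + 1)) + 1 = vcomp (f t))).card := by
  have key : ∀ t ≤ k,
      (Finset.univ.filter (fun i : Fin n => f t i i = 0)).card ≤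
      ((Finset.range t).filter (fun s => ¬ vcomp (f (s + 1)) + 1 = vcomp (f s))).card := by
    intro t
    induction t with
    | zero =>
      intro _
      simp [h0, Matrix.one_apply]
    | succ t ih =>
      intro ht
      have htk : t < k := ht
      obtain ⟨i, j, hij, hstep'⟩ := hstep t htk
      rw [Finset.range_add_one, Finset.filter_insert]
      by_cases hlink : vcomp (f (t + 1)) + 1 = vcomp (f t)
      · rw [if_neg (by simpa using hlink)]
        have hMij : f t i j = 0 := by
          rcases zmod2_cases (f t i j) with h | h
          · exact h
          · exfalso
            have hle := vcomp_le_of_one hij h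
            rw [← hstep'] at hle
            omega
        have hdiag : ∀ l : Fin n, f (t + 1) l l = f t l l := by
          intro l
          rw [hstep']
          by_cases hl : l = j
          · subst hl
            rw [cnotStep_apply_self, hMij, zero_add]
          · rw [cnotStep_apply_ne _ _ _ hl]
        have heq : (Finset.univ.filter (fun i : Fin n => f (t + 1) i i = 0)) =
            (Finset.univ.filter (fun i : Fin n => f t i i = 0)) := by
          apply Finset.filter_congr
          intro x _
          rw [hdiag]
        rw [heq]
        exact ih (le_of_lt htk)
      · rw [if_pos (by simpa using hlink)]
        have hsub : (Finset.univ.filter (fun i : Fin n => f (t + 1) i i = 0)) ⊆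
            insert j (Finset.univ.filter (fun i : Fin n => f t i i = 0)) := by
          intro x hx
          simp only [Finset.mem_filter, Finset.mem_univ, true_and] at hx
          by_cases hxj : x = j
          · simp [hxj]
          · apply Finset.mem_insert_of_mem
            simp only [Finset.mem_filter, Finset.mem_univ, true_and]
            rw [hstep', cnotStep_apply_ne _ _ _ hxj] at hx
            exact hx
        calc (Finset.univ.filter (fun i : Fin n => f (t + 1) i i = 0)).card
            ≤ (insert j (Finset.univ.filter (fun i : Fin n => f t i i = 0))).card :=
              Finset.card_le_card hsub
          _ ≤ (Finset.univ.filter (fun i : Fin n => f t i i = 0)).card + 1 :=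
              Finset.card_insert_le _ _
          _ ≤ ((Finset.range t).filter
                (fun s => ¬ vcomp (f (s + 1)) + 1 = vcomp (f s))).card + 1 := by
              have := ih (le_of_lt htk)
              omega
          _ = _ := by
              rw [Finset.card_insert_of_notMem (by simp)]
  simpa [hk] using key k le_rfl
end
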